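/- arXiv:2109.05235 — 2 statements merged into one kernel-verified Lean document; each statement's English description precedes it below -/
import Mathlib

section
/- Let (X,d) be a metric space equipped with a Borel measure μ, let x ∈ X, R > 0 and n ≥ 1 a real number. Assume that 0 < μ(B(x,r)) < ∞ for all 0 < r ≤ R and that the volume doubling property holds: μ(B(x,r₂))/r₂ⁿ ≤ 2·μ(B(x,r₁))/r₁ⁿ for all 0 < r₁ < r₂ ≤ R. Let v : X → ℝ be a measurable function that is positive and bounded on B(x,R), and suppose there are constants K₁ > 0, K₂ ≥ 0 and t > s > 0 such that for every δ with 0 < δ ≤ 1/2 and every θ with 1/2 ≤ θ ≤ 4/5 − δ one has ess sup_{B(x,θR)} v ≤ (K₁·δ^{−K₂})^{1/t} · ( μ(B(x,(θ+δ)R))⁻¹ ∫_{B(x,(θ+δ)R)} v^t dμ )^{1/t}. Then for every τ with 0 < τ ≤ 3/10 there exists a constant C > 0, depending only on K₁, K₂, n, s, t and τ, such that ess sup_{B(x,(4/5−τ)R)} v ≤ C · ( μ(B(x,R))⁻¹ ∫_{B(x,R)} v^s dμ )^{1/s}. -/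
/-! Set `θₖ = 4/5 - τ 2⁻ᵏ`, so that `θₖ + τ 2⁻⁽ᵏ⁺¹⁾ = θₖ₊₁` increases to `4/5`, and let `Eₖ` be the essential
supremum of `v` on `B(x, θₖ R)`. Writing `vᵗ ≤ Eₖ₊₁ᵗ⁻ˢ vˢ` inside the hypothesis at
`(δ, θ) = (τ 2⁻⁽ᵏ⁺¹⁾, θₖ)` and comparing `μ(B(x, θₖ₊₁ R))` with `μ(B(x, R))` by doubling gives
`Eₖ ≤ c bᵏ Eₖ₊₁^β` with `β = 1 - s/t < 1`, where `c` is `Q^(1/t)` times a constant and `Q` is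
the average of `vˢ` over `B(x, R)`. Since `v` is bounded, iterating this and letting `k → ∞`
yields `E₀ ≤ c^(1/(1-β)) b^(β/(1-β)²)`, and `c^(1/(1-β))` is a constant times `Q^(1/s)`. -/

open MeasureTheory Metric Filter Finset Topology

theorem le_mul_rpow_of_forall_le_mul_pow_mul_rpow_succ {c b β : ℝ} {M : ℕ → ℝ}
    (hc : 0 ≤ c) (hb : 0 < b) (hβ : 0 < β) (hM : ∀ k, 0 ≤ M k)
    (hstep : ∀ k, M k ≤ c * b ^ k * M (k + 1) ^ β) (N : ℕ) :
    M 0 ≤ c ^ (∑ k ∈ range N, β ^ k) * b ^ (∑ k ∈ range N, (k : ℝ) * β ^ k) *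
      M N ^ (β ^ N) := by
  induction N with
  | zero => simp
  | succ N ih =>
    have hpow : M N ^ (β ^ N) ≤
        c ^ (β ^ N) * b ^ ((N : ℝ) * β ^ N) * M (N + 1) ^ (β ^ (N + 1)) :=
      calc M N ^ (β ^ N) ≤ (c * b ^ N * M (N + 1) ^ β) ^ (β ^ N) :=
            Real.rpow_le_rpow (hM N) (hstep N) (pow_pos hβ N).le
        _ = c ^ (β ^ N) * b ^ ((N : ℝ) * β ^ N) * M (N + 1) ^ (β ^ (N + 1)) := by
            rw [Real.mul_rpow (by positivity) (Real.rpow_nonneg (hM _) _),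
              Real.mul_rpow hc (by positivity), ← Real.rpow_mul (hM _), ← pow_succ',
              ← Real.rpow_natCast b N, ← Real.rpow_mul hb.le]
    calc M 0 ≤ c ^ (∑ k ∈ range N, β ^ k) * b ^ (∑ k ∈ range N, (k : ℝ) * β ^ k) *
          (c ^ (β ^ N) * b ^ ((N : ℝ) * β ^ N) * M (N + 1) ^ (β ^ (N + 1))) :=
          ih.trans (by gcongr)
      _ = _ := by
          rw [sum_range_succ, sum_range_succ, Real.rpow_add' hc (by positivity),
            Real.rpow_add hb]
          ring

theorem le_of_forall_le_mul_pow_mul_rpow_succ {c b β B : ℝ} {M : ℕ → ℝ}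
    (hc : 0 ≤ c) (hb : 0 < b) (hβ₀ : 0 < β) (hβ₁ : β < 1) (hB : 0 < B)
    (hM : ∀ k, 0 ≤ M k) (hMB : ∀ k, M k ≤ B)
    (hstep : ∀ k, M k ≤ c * b ^ k * M (k + 1) ^ β) :
    M 0 ≤ c ^ (1 - β)⁻¹ * b ^ (β / (1 - β) ^ 2) := by
  have hgeom : HasSum (fun k : ℕ => β ^ k) (1 - β)⁻¹ := hasSum_geometric_of_lt_one hβ₀.le hβ₁
  have harith : HasSum (fun k : ℕ => (k : ℝ) * β ^ k) (β / (1 - β) ^ 2) :=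
    hasSum_coe_mul_geometric_of_norm_lt_one (by rwa [Real.norm_of_nonneg hβ₀.le])
  have hbound : ∀ N : ℕ, M 0 ≤ c ^ (∑ k ∈ range N, β ^ k) *
      b ^ (∑ k ∈ range N, (k : ℝ) * β ^ k) * B ^ (β ^ N) := fun N =>
    (le_mul_rpow_of_forall_le_mul_pow_mul_rpow_succ hc hb hβ₀ hM hstep N).trans
      (by gcongr; exacts [hM N, hMB N])
  have hlim : Tendsto (fun N : ℕ => c ^ (∑ k ∈ range N, β ^ k) *
      b ^ (∑ k ∈ range N, (k : ℝ) * β ^ k) * B ^ (β ^ N)) atTop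
      (𝓝 (c ^ (1 - β)⁻¹ * b ^ (β / (1 - β) ^ 2) * B ^ (0 : ℝ))) :=
    ((tendsto_const_nhds.rpow hgeom.tendsto_sum_nat (Or.inr (by simpa using hβ₁))).mul
      (tendsto_const_nhds.rpow harith.tendsto_sum_nat (Or.inl hb.ne'))).mul
      (tendsto_const_nhds.rpow (tendsto_pow_atTop_nhds_zero_of_lt_one hβ₀.le hβ₁) (Or.inl hB.ne'))
  simpa using ge_of_tendsto' hlim hbound

theorem average_rpow_le_rpow_mul_average_rpow {α : Type*} [MeasurableSpace α] {ν : Measure α}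
    {f : α → ℝ} {M s t : ℝ} (hst : s ≤ t) (hf₀ : ∀ᵐ y ∂ν, 0 < f y) (hfM : ∀ᵐ y ∂ν, f y ≤ M)
    (hfs : Integrable (fun y => f y ^ s) ν) :
    ⨍ y, f y ^ t ∂ν ≤ M ^ (t - s) * ⨍ y, f y ^ s ∂ν := by
  have hpt : ∀ᵐ y ∂ν, f y ^ t ≤ M ^ (t - s) * f y ^ s := by
    filter_upwards [hf₀, hfM] with y hy₀ hyM
    calc f y ^ t = f y ^ (t - s) * f y ^ s := by rw [← Real.rpow_add hy₀, sub_add_cancel]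
      _ ≤ M ^ (t - s) * f y ^ s := by gcongr
  have hint : ∫ y, f y ^ t ∂ν ≤ M ^ (t - s) * ∫ y, f y ^ s ∂ν := by
    rw [← integral_const_mul]
    exact integral_mono_of_nonneg (hf₀.mono fun y hy => by positivity) (hfs.const_mul _) hpt
  rw [average_eq, average_eq, smul_eq_mul, smul_eq_mul, mul_left_comm]
  exact mul_le_mul_of_nonneg_left hint (by positivity)

theorem setAverage_le_mul_setAverage_of_subset {α : Type*} [MeasurableSpace α] {μ : Measure α}
    {s S : Set α} {g : α → ℝ} {C : ℝ} (hsS : s ⊆ S) (hs : μ s ≠ 0) (hS : μ S ≠ ⊤)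
    (hμ : μ.real S ≤ C * μ.real s) (hg₀ : 0 ≤ᵐ[μ.restrict S] g) (hg : IntegrableOn g S μ) :
    ⨍ y in s, g y ∂μ ≤ C * ⨍ y in S, g y ∂μ := by
  have hs_pos : 0 < μ.real s := ENNReal.toReal_pos hs (measure_ne_top_of_subset hsS hS)
  have hS_pos : 0 < μ.real S := hs_pos.trans_le (measureReal_mono hsS hS)
  have hinv : (μ.real s)⁻¹ ≤ C * (μ.real S)⁻¹ := by
    rw [inv_le_iff_one_le_mul₀ hs_pos, mul_comm C, mul_assoc, ← div_eq_inv_mul,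
      one_le_div hS_pos]
    linarith
  rw [setAverage_eq, setAverage_eq, smul_eq_mul, smul_eq_mul, ← mul_assoc]
  exact mul_le_mul hinv (setIntegral_mono_set hg hg₀ hsS.eventuallyLE)
    (integral_nonneg_of_ae (ae_restrict_of_ae_restrict_of_subset hsS hg₀))
    ((inv_pos.2 hs_pos).le.trans hinv)

theorem le_two_rpow_mul_of_div_rpow_le {A B n r R : ℝ} (hn : 0 ≤ n) (hr : 0 < r) (hrR : r < R)
    (hR : R ≤ 2 * r) (hB : 0 ≤ B) (hAB : A / R ^ n ≤ 2 * B / r ^ n) :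
    A ≤ 2 ^ (n + 1) * B := by
  have hR₀ : 0 < R := hr.trans hrR
  calc A = A / R ^ n * R ^ n := by field_simp
    _ ≤ 2 * B / r ^ n * R ^ n := by gcongr
    _ = 2 * B * (R / r) ^ n := by rw [Real.div_rpow hR₀.le hr.le]; ring
    _ ≤ 2 * B * 2 ^ n := by gcongr; rwa [div_le_iff₀ hr]
    _ = 2 ^ (n + 1) * B := by rw [Real.rpow_add_one two_ne_zero]; ring

theorem essSup_nonneg {α : Type*} [MeasurableSpace α] {ν : Measure α} {f : α → ℝ} {M : ℝ}
    (hν : ν ≠ 0) (hf₀ : 0 ≤ᵐ[ν] f) (hfM : ∀ᵐ y ∂ν, f y ≤ M) : 0 ≤ essSup f ν := by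
  have : (ae ν).NeBot := ae_neBot.2 hν
  obtain ⟨y, hy₀, hyM⟩ := (hf₀.and (ae_le_essSup ⟨M, hfM⟩)).exists
  exact hy₀.trans hyM

theorem rpow_mul_rpow_neg_div_two_pow_succ {K τ γ p : ℝ} (hK : 0 ≤ K) (hτ : 0 < τ) (k : ℕ) :
    (K * (τ / 2 ^ (k + 1)) ^ (-γ)) ^ p = (K * (τ / 2) ^ (-γ)) ^ p * ((2 : ℝ) ^ (γ * p)) ^ k := by
  rw [pow_succ', ← div_div, Real.div_rpow (by positivity) (by positivity), div_eq_mul_inv,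
    ← Real.rpow_neg (by positivity), neg_neg, ← Real.rpow_pow_comm zero_le_two, ← mul_assoc,
    Real.mul_rpow (by positivity) (by positivity),
    ← Real.rpow_pow_comm (Real.rpow_nonneg zero_le_two γ) p k, Real.rpow_mul zero_le_two]

theorem four_fifths_sub_div_two_pow_mem_Ico {τ : ℝ} (hτ : 0 < τ) (hτ' : τ ≤ 3 / 10) (k : ℕ) :
    4 / 5 - τ / 2 ^ k ∈ Set.Ico (1 / 2) 1 := by
  have : 0 < τ / 2 ^ k ∧ τ / 2 ^ k ≤ τ :=
    ⟨by positivity, div_le_self hτ.le (one_le_pow₀ one_le_two)⟩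
  constructor <;> linarith

section Ball

variable {X : Type*} [MetricSpace X] [MeasurableSpace X] [OpensMeasurableSpace X]
  {μ : Measure X} {x : X} {R M : ℝ} {v : X → ℝ}

theorem integrableOn_ball_rpow (hμR : μ (ball x R) ≠ ⊤) (hv : Measurable v)
    (hv₀ : ∀ y ∈ ball x R, 0 < v y) (hvM : ∀ y ∈ ball x R, v y ≤ M) {p : ℝ} (hp : 0 ≤ p) :
    IntegrableOn (fun y => v y ^ p) (ball x R) μ := by
  have : IsFiniteMeasure (μ.restrict (ball x R)) := isFiniteMeasure_restrict.2 hμR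
  refine Integrable.of_bound (hv.pow_const p).aestronglyMeasurable (M ^ p)
    ((ae_restrict_iff' measurableSet_ball).2 (ae_of_all _ fun y hy => ?_))
  rw [Real.norm_of_nonneg (Real.rpow_nonneg (hv₀ y hy).le p)]
  exact Real.rpow_le_rpow (hv₀ y hy).le (hvM y hy) hp

theorem essSup_restrict_ball_mem_Icc {r : ℝ} (hrR : r ≤ R) (hμr : μ (ball x r) ≠ 0)
    (hv₀ : ∀ y ∈ ball x R, 0 < v y) (hvM : ∀ y ∈ ball x R, v y ≤ M) :
    essSup v (μ.restrict (ball x r)) ∈ Set.Icc 0 M := by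
  have hae : ∀ᵐ y ∂μ.restrict (ball x r), 0 ≤ v y ∧ v y ≤ M :=
    ae_restrict_of_forall_mem measurableSet_ball fun y hy =>
      ⟨(hv₀ y (ball_subset_ball hrR hy)).le, hvM y (ball_subset_ball hrR hy)⟩
  have : (ae (μ.restrict (ball x r))).NeBot := ae_restrict_neBot.2 hμr
  exact ⟨essSup_nonneg (by simpa using hμr) (hae.mono fun y hy => hy.1)
      (hae.mono fun y hy => hy.2),
    essSup_le_of_ae_le M (hae.mono fun y hy => hy.2)
      (IsBoundedUnder.isCoboundedUnder_le ⟨0, eventually_map.2 (hae.mono fun y hy => hy.1)⟩)⟩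

theorem setAverage_ball_rpow_nonneg {r p : ℝ} (hrR : r ≤ R) (hv₀ : ∀ y ∈ ball x R, 0 < v y) :
    0 ≤ ⨍ y in ball x r, v y ^ p ∂μ := by
  rw [setAverage_eq, smul_eq_mul]
  exact mul_nonneg (inv_nonneg.2 measureReal_nonneg) (setIntegral_nonneg measurableSet_ball
    fun y hy => Real.rpow_nonneg (hv₀ y (ball_subset_ball hrR hy)).le p)

theorem setAverage_ball_rpow_le {n r s t : ℝ} (hn : 0 ≤ n) (hs : 0 ≤ s) (hst : s ≤ t)
    (hr : R ≤ 2 * r) (hrR : r < R) (hμr : μ (ball x r) ≠ 0) (hμR : μ (ball x R) ≠ ⊤)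
    (hdoub : μ.real (ball x R) / R ^ n ≤ 2 * μ.real (ball x r) / r ^ n)
    (hv : Measurable v) (hv₀ : ∀ y ∈ ball x R, 0 < v y) (hvM : ∀ y ∈ ball x R, v y ≤ M) :
    ⨍ y in ball x r, v y ^ t ∂μ ≤
      2 ^ (n + 1) * essSup v (μ.restrict (ball x r)) ^ (t - s) * ⨍ y in ball x R, v y ^ s ∂μ := by
  have hsub : ball x r ⊆ ball x R := ball_subset_ball hrR.le
  have hr₀ : 0 < r := by
    by_contra! h
    exact hμr (by rw [ball_eq_empty.2 h, measure_empty])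
  have hae : ∀ᵐ y ∂μ.restrict (ball x r), 0 < v y ∧ v y ≤ M :=
    ae_restrict_of_forall_mem measurableSet_ball fun y hy => ⟨hv₀ y (hsub hy), hvM y (hsub hy)⟩
  have hE : ∀ᵐ y ∂μ.restrict (ball x r), v y ≤ essSup v (μ.restrict (ball x r)) :=
    ae_le_essSup ⟨M, eventually_map.2 (hae.mono fun y hy => hy.2)⟩
  have hE₀ := (essSup_restrict_ball_mem_Icc hrR.le hμr hv₀ hvM).1
  have hint := integrableOn_ball_rpow hμR hv hv₀ hvM hs
  calc ⨍ y in ball x r, v y ^ t ∂μ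
      ≤ essSup v (μ.restrict (ball x r)) ^ (t - s) * ⨍ y in ball x r, v y ^ s ∂μ :=
        average_rpow_le_rpow_mul_average_rpow hst (hae.mono fun y hy => hy.1) hE
          (hint.mono_set hsub)
    _ ≤ essSup v (μ.restrict (ball x r)) ^ (t - s) *
          (2 ^ (n + 1) * ⨍ y in ball x R, v y ^ s ∂μ) := by
        gcongr
        refine setAverage_le_mul_setAverage_of_subset hsub hμr hμR ?_ ?_ hint
        · exact le_two_rpow_mul_of_div_rpow_le hn hr₀ hrR hr measureReal_nonneg hdoub
        · exact ae_restrict_of_forall_mem measurableSet_ball fun y hy =>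
            Real.rpow_nonneg (hv₀ y hy).le s
    _ = _ := by ring

theorem essSup_ball_le_of_le_setAverage_rpow {n r r' s t A : ℝ} (hn : 0 ≤ n) (hs : 0 ≤ s)
    (hst : s ≤ t) (ht : 0 < t) (hA : 0 ≤ A) (hr' : R ≤ 2 * r') (hr'R : r' < R)
    (hμr' : μ (ball x r') ≠ 0) (hμR : μ (ball x R) ≠ ⊤)
    (hdoub : μ.real (ball x R) / R ^ n ≤ 2 * μ.real (ball x r') / r' ^ n)
    (hv : Measurable v) (hv₀ : ∀ y ∈ ball x R, 0 < v y) (hvM : ∀ y ∈ ball x R, v y ≤ M)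
    (h : essSup v (μ.restrict (ball x r)) ≤
      A ^ (1 / t) * (⨍ y in ball x r', v y ^ t ∂μ) ^ (1 / t)) :
    essSup v (μ.restrict (ball x r)) ≤ (2 ^ (n + 1) * A) ^ (1 / t) *
      (⨍ y in ball x R, v y ^ s ∂μ) ^ (1 / t) *
        essSup v (μ.restrict (ball x r')) ^ (1 - s / t) := by
  have hE₀ := (essSup_restrict_ball_mem_Icc hr'R.le hμr' hv₀ hvM).1
  have hQ : 0 ≤ ⨍ y in ball x R, v y ^ s ∂μ := setAverage_ball_rpow_nonneg le_rfl hv₀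
  calc essSup v (μ.restrict (ball x r))
      ≤ A ^ (1 / t) * (2 ^ (n + 1) * essSup v (μ.restrict (ball x r')) ^ (t - s) *
          ⨍ y in ball x R, v y ^ s ∂μ) ^ (1 / t) := by
        exact h.trans (by gcongr; exacts [setAverage_ball_rpow_nonneg hr'R.le hv₀,
          setAverage_ball_rpow_le hn hs hst hr' hr'R hμr' hμR hdoub hv hv₀ hvM])
    _ = _ := by
        rw [Real.mul_rpow (by positivity) hQ, Real.mul_rpow (by positivity) (by positivity),
          Real.mul_rpow (by positivity) hA, ← Real.rpow_mul hE₀,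
          show (t - s) * (1 / t) = 1 - s / t by field_simp]
        ring

end Ball

theorem stmt11_general (n K₁ K₂ s t τ : ℝ) (hn : 1 ≤ n) (hK₁ : 0 < K₁)
    (hs : 0 < s) (hst : s < t) (hτ : 0 < τ) (hτ' : τ ≤ 3 / 10) :
    ∃ C > 0, ∀ (X : Type) [MetricSpace X] [MeasurableSpace X] [BorelSpace X]
      (μ : Measure X) (x : X) (R : ℝ) (v : X → ℝ),
      0 < R →
      (∀ r : ℝ, 0 < r → r ≤ R → 0 < μ (ball x r) ∧ μ (ball x r) < ⊤) →
      (∀ r₁ r₂ : ℝ, 0 < r₁ → r₁ < r₂ → r₂ ≤ R →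
        (μ (ball x r₂)).toReal / r₂ ^ n ≤ 2 * (μ (ball x r₁)).toReal / r₁ ^ n) →
      Measurable v →
      (∀ y ∈ ball x R, 0 < v y) →
      (∃ M : ℝ, ∀ y ∈ ball x R, v y ≤ M) →
      (∀ δ θ : ℝ, 0 < δ → δ ≤ 1 / 2 → 1 / 2 ≤ θ → θ ≤ 4 / 5 - δ →
        essSup v (μ.restrict (ball x (θ * R))) ≤
          (K₁ * δ ^ (-K₂)) ^ (1 / t) *
            ((μ (ball x ((θ + δ) * R))).toReal⁻¹ *
              ∫ y in ball x ((θ + δ) * R), v y ^ t ∂μ) ^ (1 / t)) →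
      essSup v (μ.restrict (ball x ((4 / 5 - τ) * R))) ≤
        C * ((μ (ball x R)).toReal⁻¹ * ∫ y in ball x R, v y ^ s ∂μ) ^ (1 / s) := by
  have ht : 0 < t := hs.trans hst
  set a := (2 ^ (n + 1) * K₁ * (τ / 2) ^ (-K₂)) ^ (1 / t)
  set b : ℝ := 2 ^ (K₂ / t)
  set β := 1 - s / t
  have hβ : 0 < β ∧ β < 1 := ⟨by simpa [β] using (div_lt_one ht).2 hst, by simp [β]; positivity⟩
  refine ⟨a ^ (t / s) * b ^ (β / (1 - β) ^ 2), by positivity, ?_⟩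
  intro X _ _ _ μ x R v hR hμ hdoub hv hv₀ ⟨M, hvM⟩ hyp
  set θ : ℕ → ℝ := fun k => 4 / 5 - τ / 2 ^ k
  have hθ : ∀ k, θ k ∈ Set.Ico (1 / 2) 1 := four_fifths_sub_div_two_pow_mem_Ico hτ hτ'
  have hθR : ∀ k, 0 < θ k * R ∧ R ≤ 2 * (θ k * R) ∧ θ k * R < R := fun k =>
    ⟨by nlinarith [(hθ k).1], by nlinarith [(hθ k).1], by nlinarith [(hθ k).2]⟩
  set E : ℕ → ℝ := fun k => essSup v (μ.restrict (ball x (θ k * R)))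
  set Q := ⨍ y in ball x R, v y ^ s ∂μ
  have hE : ∀ k, E k ∈ Set.Icc 0 M := fun k => essSup_restrict_ball_mem_Icc (hθR k).2.2.le
    (hμ _ (hθR k).1 (hθR k).2.2.le).1.ne' hv₀ hvM
  have hQ : 0 ≤ Q := setAverage_ball_rpow_nonneg le_rfl hv₀
  have havg : ∀ p r : ℝ, (μ (ball x r)).toReal⁻¹ * ∫ y in ball x r, v y ^ p ∂μ =
      ⨍ y in ball x r, v y ^ p ∂μ := fun p r => (setAverage_eq μ _ _).symm
  have hstep : ∀ k, E k ≤ a * Q ^ (1 / t) * b ^ k * E (k + 1) ^ β := fun k => by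
    have hδ : 0 < τ / 2 ^ (k + 1) := by positivity
    have hθ_succ : θ k + τ / 2 ^ (k + 1) = θ (k + 1) := by simp only [θ]; field_simp; ring
    have hk := hyp _ (θ k) hδ (by linarith [(hθ k).1, (hθ (k + 1)).2]) (hθ k).1
      (by linarith [show θ (k + 1) = 4 / 5 - τ / 2 ^ (k + 1) from rfl])
    rw [hθ_succ, havg] at hk
    have := essSup_ball_le_of_le_setAverage_rpow (by linarith) hs.le hst.le ht (by positivity)
      (hθR _).2.1 (hθR _).2.2 (hμ _ (hθR _).1 (hθR _).2.2.le).1.ne' (hμ R hR le_rfl).2.ne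
      (hdoub _ _ (hθR _).1 (hθR _).2.2 le_rfl) hv hv₀ hvM hk
    rw [← mul_assoc, rpow_mul_rpow_neg_div_two_pow_succ (by positivity) hτ, mul_one_div] at this
    exact this.trans_eq (by ring)
  have hM : 0 < M := (hv₀ x (mem_ball_self hR)).trans_le (hvM x (mem_ball_self hR))
  have key := le_of_forall_le_mul_pow_mul_rpow_succ (by positivity) (by positivity) hβ.1 hβ.2 hM
    (fun k => (hE k).1) (fun k => (hE k).2) hstep
  have h1β : (1 - β)⁻¹ = t / s := by simp [β]
  rw [h1β, Real.mul_rpow (by positivity) (by positivity), ← Real.rpow_mul hQ,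
    show 1 / t * (t / s) = 1 / s by field_simp] at key
  calc essSup v (μ.restrict (ball x ((4 / 5 - τ) * R))) = E 0 := by simp [E, θ]
    _ ≤ _ := key
    _ = _ := by rw [havg]; ring

theorem stmt11 (n K₁ K₂ s t τ : ℝ) (hn : 1 ≤ n) (hK₁ : 0 < K₁) (hK₂ : 0 ≤ K₂)
    (hs : 0 < s) (hst : s < t) (hτ : 0 < τ) (hτ' : τ ≤ 3 / 10) :
    ∃ C > 0, ∀ (X : Type) [MetricSpace X] [MeasurableSpace X] [BorelSpace X]
      (μ : Measure X) (x : X) (R : ℝ) (v : X → ℝ),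
      0 < R →
      (∀ r : ℝ, 0 < r → r ≤ R → 0 < μ (ball x r) ∧ μ (ball x r) < ⊤) →
      (∀ r₁ r₂ : ℝ, 0 < r₁ → r₁ < r₂ → r₂ ≤ R →
        (μ (ball x r₂)).toReal / r₂ ^ n ≤ 2 * (μ (ball x r₁)).toReal / r₁ ^ n) →
      Measurable v →
      (∀ y ∈ ball x R, 0 < v y) →
      (∃ M : ℝ, ∀ y ∈ ball x R, v y ≤ M) →
      (∀ δ θ : ℝ, 0 < δ → δ ≤ 1 / 2 → 1 / 2 ≤ θ → θ ≤ 4 / 5 - δ →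
        essSup v (μ.restrict (ball x (θ * R))) ≤
          (K₁ * δ ^ (-K₂)) ^ (1 / t) *
            ((μ (ball x ((θ + δ) * R))).toReal⁻¹ *
              ∫ y in ball x ((θ + δ) * R), v y ^ t ∂μ) ^ (1 / t)) →
      essSup v (μ.restrict (ball x ((4 / 5 - τ) * R))) ≤
        C * ((μ (ball x R)).toReal⁻¹ * ∫ y in ball x R, v y ^ s ∂μ) ^ (1 / s) :=
  stmt11_general n K₁ K₂ s t τ hn hK₁ hs hst hτ hτ'
end

section
/- Let λ ∈ (0,1), K ≥ 0, A > 0 and B ≥ 1 be real numbers, and let (m_j)_{j≥0} be a sequence of real numbers with 0 ≤ m_j ≤ B for all j and m_{j−1} ≤ A · 2^{jK} · (m_j)^λ for all j ≥ 1. Then m_0 ≤ 2^{K/(1−λ)²} · A^{1/(1−λ)}. -/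
open Finset Filter Real

theorem stmt12 (lam K A B : ℝ) (hlam0 : 0 < lam) (hlam1 : lam < 1) (hK : 0 ≤ K)
    (hA : 0 < A) (hB : 1 ≤ B) (m : ℕ → ℝ)
    (hm0 : ∀ j, 0 ≤ m j) (hmB : ∀ j, m j ≤ B)
    (hrec : ∀ j : ℕ, 1 ≤ j → m (j - 1) ≤ A * 2 ^ ((j : ℝ) * K) * m j ^ lam) :
    m 0 ≤ 2 ^ (K / (1 - lam) ^ 2) * A ^ (1 / (1 - lam)) := by
  have hB0 : (0:ℝ) < B := lt_of_lt_of_le one_pos hB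
  have h1l : (0:ℝ) < 1 - lam := by linarith
  set S : ℕ → ℝ := fun n => ∑ i ∈ range n, lam ^ i with hS
  set T : ℕ → ℝ := fun n => ∑ i ∈ range n, ((i : ℝ) + 1) * lam ^ i with hT
  have claim : ∀ n, m 0 ≤ A ^ S n * 2 ^ (K * T n) * m n ^ (lam ^ n) := by
    intro n
    induction n with
    | zero => simp [hS, hT]
    | succ n ih =>
      have hr := hrec (n + 1) (by omega)
      simp only [Nat.add_sub_cancel] at hr
      have hln : (0:ℝ) ≤ lam ^ n := pow_nonneg hlam0.le n
      have h2 : (0:ℝ) ≤ 2 := by norm_num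
      have step : m n ^ (lam ^ n) ≤
          A ^ (lam ^ n) * 2 ^ (((n:ℝ) + 1) * K * lam ^ n) * m (n+1) ^ (lam ^ (n+1)) := by
        calc m n ^ (lam ^ n)
            ≤ (A * 2 ^ (((n:ℝ)+1) * K) * m (n+1) ^ lam) ^ (lam ^ n) := by
              apply Real.rpow_le_rpow (hm0 n) _ hln
              convert hr using 3
              push_cast; ring
          _ = A ^ (lam ^ n) * 2 ^ (((n:ℝ) + 1) * K * lam ^ n) * m (n+1) ^ (lam ^ (n+1)) := by
              rw [Real.mul_rpow (by positivity) (Real.rpow_nonneg (hm0 _) _),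
                Real.mul_rpow hA.le (Real.rpow_nonneg h2 _),
                ← Real.rpow_mul (hm0 _), ← Real.rpow_mul h2]
              rw [show lam * (lam ^ n : ℝ) = lam ^ (n+1) by ring]
      have hpos : (0:ℝ) ≤ A ^ S n * 2 ^ (K * T n) := by positivity
      calc m 0 ≤ A ^ S n * 2 ^ (K * T n) * m n ^ (lam ^ n) := ih
        _ ≤ A ^ S n * 2 ^ (K * T n) *
            (A ^ (lam ^ n) * 2 ^ (((n:ℝ) + 1) * K * lam ^ n) * m (n+1) ^ (lam ^ (n+1))) :=
          mul_le_mul_of_nonneg_left step hpos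
        _ = A ^ S (n+1) * 2 ^ (K * T (n+1)) * m (n+1) ^ (lam ^ (n+1)) := by
          have hSn : S (n+1) = S n + lam ^ n := Finset.sum_range_succ _ _
          have hTn : T (n+1) = T n + ((n:ℝ)+1) * lam ^ n := Finset.sum_range_succ _ _
          rw [hSn, hTn, Real.rpow_add hA, mul_add, Real.rpow_add two_pos]
          ring_nf
  -- bound m n by B
  have bound : ∀ n, m 0 ≤ A ^ S n * 2 ^ (K * T n) * B ^ (lam ^ n) := by
    intro n
    refine (claim n).trans (mul_le_mul_of_nonneg_left ?_ (by positivity))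
    exact Real.rpow_le_rpow (hm0 n) (hmB n) (pow_nonneg hlam0.le n)
  -- limits
  have hSlim : Tendsto S atTop (nhds (1 - lam)⁻¹) :=
    (hasSum_geometric_of_lt_one hlam0.le hlam1).tendsto_sum_nat
  have hTsum : HasSum (fun i : ℕ => ((i : ℝ) + 1) * lam ^ i) (((1 - lam) ^ 2)⁻¹) := by
    have h1 : HasSum (fun i : ℕ => (i : ℝ) * lam ^ i) (lam / (1 - lam) ^ 2) :=
      hasSum_coe_mul_geometric_of_norm_lt_one (by rwa [Real.norm_eq_abs, abs_of_pos hlam0])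
    have h2 : HasSum (fun i : ℕ => lam ^ i) ((1 - lam)⁻¹) :=
      hasSum_geometric_of_lt_one hlam0.le hlam1
    have hval : ((1 - lam) ^ 2)⁻¹ = lam / (1 - lam) ^ 2 + (1 - lam)⁻¹ := by
      field_simp
      ring
    rw [hval]
    convert h1.add h2 using 2 with i
    ring
  have hTlim : Tendsto T atTop (nhds (((1 - lam) ^ 2)⁻¹)) := hTsum.tendsto_sum_nat
  have hlamlim : Tendsto (fun n : ℕ => lam ^ n) atTop (nhds 0) :=
    tendsto_pow_atTop_nhds_zero_of_lt_one hlam0.le hlam1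
  have hf : Tendsto (fun n => A ^ S n * 2 ^ (K * T n) * B ^ (lam ^ n)) atTop
      (nhds (A ^ (1 - lam)⁻¹ * 2 ^ (K * ((1 - lam) ^ 2)⁻¹) * 1)) := by
    have t1 : Tendsto (fun n => A ^ S n) atTop (nhds (A ^ (1 - lam)⁻¹)) :=
      Filter.Tendsto.rpow (tendsto_const_nhds (x := A)) hSlim (Or.inl hA.ne')
    have t2 : Tendsto (fun n => (2:ℝ) ^ (K * T n)) atTop
        (nhds ((2:ℝ) ^ (K * ((1 - lam) ^ 2)⁻¹))) :=
      Filter.Tendsto.rpow (tendsto_const_nhds (x := (2:ℝ)))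
        (hTlim.const_mul K) (Or.inl two_ne_zero)
    have t3 : Tendsto (fun n : ℕ => B ^ (lam ^ n)) atTop (nhds 1) := by
      have := Filter.Tendsto.rpow (tendsto_const_nhds (x := B)) hlamlim (Or.inl hB0.ne')
      simpa using this
    exact (t1.mul t2).mul t3
  have final : m 0 ≤ A ^ (1 - lam)⁻¹ * 2 ^ (K * ((1 - lam) ^ 2)⁻¹) * 1 :=
    ge_of_tendsto' hf bound
  rw [mul_one] at final
  rw [one_div, div_eq_mul_inv]
  linarith [final]
end
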